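/- arXiv:2010.02750 — 3 statements merged into one kernel-verified Lean document; each statement's English description precedes it below -/
import Mathlib

section
/- For any nonzero rational number q, the product of the real absolute value |q| with the p-adic absolute values |q|_p over all primes p equals 1. -/
/-!
Both sides are multiplicative in `q` and insensitive to its sign, so it suffices to treat a prime
`ℓ`: there `|ℓ|_p = 1` for `p ≠ ℓ` and `|ℓ|_ℓ = ℓ⁻¹`, which cancels `|ℓ| = ℓ`.
-/

open Function

instance Nat.Primes.fact_prime (p : Nat.Primes) : Fact (p : ℕ).Prime := ⟨p.2⟩

protected lemma padicNorm.abs (p : ℕ) (q : ℚ) : padicNorm p |q| = padicNorm p q := by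
  rcases abs_choice q with h | h <;> simp only [h, padicNorm.neg]

lemma hasFiniteMulSupport_padicNorm_natCast {n : ℕ} (hn : n ≠ 0) :
    HasFiniteMulSupport fun p : Nat.Primes => (padicNorm p n : ℝ) := by
  refine (n.divisors.finite_toSet.preimage Nat.Primes.coe_nat_injective.injOn).subset
    fun (p : Nat.Primes) hp => ?_
  have hdvd : (p : ℕ) ∣ n := by
    by_contra h
    exact hp (by simp only [(padicNorm.nat_eq_one_iff n).mpr h, Rat.cast_one])
  exact Nat.mem_divisors.mpr ⟨hdvd, hn⟩

lemma finprod_padicNorm_prime {ℓ : ℕ} (hℓ : ℓ.Prime) :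
    ∏ᶠ p : Nat.Primes, (padicNorm p ℓ : ℝ) = (ℓ : ℝ)⁻¹ := by
  have : Fact ℓ.Prime := ⟨hℓ⟩
  rw [finprod_eq_single _ ⟨ℓ, hℓ⟩ fun p hp => ?_]
  · simp [padicNorm.padicNorm_p_of_prime]
  · simp [padicNorm.padicNorm_of_prime_of_ne (p := p) (q := ℓ) (fun h => hp (Subtype.ext h))]

lemma finprod_padicNorm_natCast {n : ℕ} (hn : n ≠ 0) :
    ∏ᶠ p : Nat.Primes, (padicNorm p n : ℝ) = (n : ℝ)⁻¹ := by
  induction n using Nat.recOnMul with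
  | zero => exact absurd rfl hn
  | one => simp
  | prime ℓ hℓ => exact finprod_padicNorm_prime hℓ
  | mul a b iha ihb =>
    obtain ⟨ha, hb⟩ := mul_ne_zero_iff.mp hn
    simp only [Nat.cast_mul, padicNorm.mul, Rat.cast_mul, mul_inv]
    rw [finprod_mul_distrib (hasFiniteMulSupport_padicNorm_natCast ha)
      (hasFiniteMulSupport_padicNorm_natCast hb), iha ha, ihb hb]

lemma finprod_padicNorm {q : ℚ} (hq : q ≠ 0) :
    ∏ᶠ p : Nat.Primes, (padicNorm p q : ℝ) = |(q : ℝ)|⁻¹ := by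
  have hnum : q.num.natAbs ≠ 0 := by simpa using hq
  have habs : |q| = (q.num.natAbs : ℚ) / q.den := by
    rw [Rat.abs_def, Rat.divInt_eq_div, Int.cast_natCast, Int.cast_natCast]
  simp only [← padicNorm.abs _ q, habs, padicNorm.div, Rat.cast_div]
  rw [finprod_div_distrib (hasFiniteMulSupport_padicNorm_natCast hnum)
      (hasFiniteMulSupport_padicNorm_natCast q.den_nz),
    finprod_padicNorm_natCast hnum, finprod_padicNorm_natCast q.den_nz, ← Rat.cast_abs, habs]
  push_cast
  rw [inv_div_inv, inv_div]

/-- **Adelic product formula.** For any nonzero rational number `q`, the product of the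
real (Archimedean) absolute value of `q` with the `p`-adic absolute values `|q|_p`
over all primes `p` equals `1`.  (The product is well-defined since `|q|_p = 1` for all
but finitely many primes, and we express it as a `finprod`.) -/
theorem adelic_product_formula (q : ℚ) (hq : q ≠ 0) :
    |(q : ℝ)| * ∏ᶠ p : Nat.Primes, ((padicNorm p q : ℝ)) = 1 := by
  rw [finprod_padicNorm hq]
  exact mul_inv_cancel₀ (by positivity)
end

section
/- If L₁ and L₂ are lattices in a two-dimensional p-adic symplectic space (F, Δ) with equal Haar measures |L₁| = |L₂|, then there exists a symplectic transformation S ∈ Sp(F, Δ) such that S·L₁ = L₂. -/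
/-!
Write a lattice as the unit ball `{x | ∀ i, ‖b.repr x i‖ ≤ 1}` of a basis `b`. Splitting it into
`p ^ k` translates of a sublattice shows that rescaling one basis vector by `t` multiplies its Haar
measure by `‖t‖`. Rescaling `b 1` by `Δ (b 0) (b 1)⁻¹` gives a self-dual lattice, so
`μ L = ‖Δ (b 0) (b 1)‖`. Hence, when `μ L₁ = μ L₂`, rescaling `b₂ 0` by a unit of `ℤ_[p]` makes
`Δ (b₁ 0) (b₁ 1) = Δ (b₂ 0) (b₂ 1)` without changing `L₂`, and the linear map sending `b₁` to `b₂`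
is then symplectic and maps `L₁` onto `L₂`.
-/

open MeasureTheory Pointwise

/-- A lattice in the two-dimensional space `Fin 2 → ℚ_[p]` is the `ℤ_[p]`-span of a
`ℚ_[p]`-basis. -/
def IsLattice {p : ℕ} [Fact p.Prime] (L : Set (Fin 2 → ℚ_[p])) : Prop :=
  ∃ b : Module.Basis (Fin 2) ℚ_[p] (Fin 2 → ℚ_[p]),
    L = {x | ∃ a c : ℤ_[p], x = (a : ℚ_[p]) • b 0 + (c : ℚ_[p]) • b 1}

/-- The dual lattice `L* = {u : Δ(u,v) ∈ ℤ_p for all v ∈ L}`. -/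
def dualLattice {p : ℕ} [Fact p.Prime]
    (Δ : (Fin 2 → ℚ_[p]) →ₗ[ℚ_[p]] (Fin 2 → ℚ_[p]) →ₗ[ℚ_[p]] ℚ_[p])
    (L : Set (Fin 2 → ℚ_[p])) : Set (Fin 2 → ℚ_[p]) :=
  {u | ∀ v ∈ L, ‖Δ u v‖ ≤ 1}

namespace Module.Basis

variable {ι R M : Type*} [Ring R] [AddCommGroup M] [Module R M]

theorem repr_equiv_refl (b₁ b₂ : Basis ι R M) (u : M) :
    b₂.repr (b₁.equiv b₂ (Equiv.refl ι) u) = b₁.repr u := by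
  simp [Basis.equiv]

theorem unitsSMul_unitsSMul (b : Basis ι R M) (w w' : ι → Rˣ) :
    (b.unitsSMul w).unitsSMul w' = b.unitsSMul (w' * w) :=
  eq_of_apply_eq fun i ↦ by simp [unitsSMul_apply, mul_smul]

theorem unitsSMul_one (b : Basis ι R M) : b.unitsSMul 1 = b :=
  eq_of_apply_eq fun i ↦ by simp [unitsSMul_apply]

end Module.Basis

namespace LinearMap.IsAlt

variable {R M N : Type*} [CommRing R] [AddCommGroup M] [Module R M] [AddCommGroup N] [Module R N]
  {B : M →ₗ[R] M →ₗ[R] N}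

theorem apply_eq_det_smul (hB : B.IsAlt) (b : Module.Basis (Fin 2) R M) (u v : M) :
    B u v = (b.repr u 0 * b.repr v 1 - b.repr u 1 * b.repr v 0) • B (b 0) (b 1) := by
  rw [← LinearMap.sum_repr_mul_repr_mul b b (B := B) u v]
  simp [Finsupp.sum_fintype, Fin.sum_univ_two, hB.self_eq_zero, ← hB.neg (b 0) (b 1), sub_smul,
    mul_smul, smul_neg]
  abel

theorem apply_basis_ne_zero [Nontrivial R] (hB : B.IsAlt) (hsep : B.SeparatingLeft)
    (b : Module.Basis (Fin 2) R M) : B (b 0) (b 1) ≠ 0 := fun h ↦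
  b.ne_zero 0 <| hsep _ fun w ↦ by rw [hB.apply_eq_det_smul b, h, smul_zero]

theorem apply_basis_equiv (hB : B.IsAlt) {b₁ b₂ : Module.Basis (Fin 2) R M}
    (h : B (b₁ 0) (b₁ 1) = B (b₂ 0) (b₂ 1)) (u v : M) :
    B (b₁.equiv b₂ (Equiv.refl _) u) (b₁.equiv b₂ (Equiv.refl _) v) = B u v := by
  rw [hB.apply_eq_det_smul b₂, hB.apply_eq_det_smul b₁ u v, h]
  simp only [Module.Basis.repr_equiv_refl]

end LinearMap.IsAlt

namespace Padic

variable {p : ℕ} [Fact p.Prime]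

theorem exists_natCast_norm_sub_le {z : ℚ_[p]} (hz : ‖z‖ ≤ 1) (k : ℕ) :
    ∃ j < p ^ k, ‖z - j‖ ≤ (p : ℝ) ^ (-k : ℤ) := by
  set r : ℤ_[p] := ⟨z, hz⟩
  refine ⟨r.appr k, r.appr_lt k, ?_⟩
  have := (PadicInt.norm_le_pow_iff_mem_span_pow _ k).2 (PadicInt.appr_spec k r)
  simpa [PadicInt.norm_def] using this

theorem eq_of_norm_natCast_sub_le {i j k : ℕ} (hi : i < p ^ k) (hj : j < p ^ k)
    (h : ‖(i - j : ℚ_[p])‖ ≤ (p : ℝ) ^ (-k : ℤ)) : i = j := by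
  have hdvd : (p ^ k : ℤ) ∣ (i - j : ℤ) := by
    rw [← norm_int_le_pow_iff_dvd]
    exact_mod_cast h
  have := Int.eq_zero_of_abs_lt_dvd hdvd (by rw [abs_sub_lt_iff]; zify at hi hj; omega)
  omega

end Padic

namespace Module.Basis

variable {p : ℕ} [Fact p.Prime] {ι V : Type*} [AddCommGroup V] [Module ℚ_[p] V]

/-- The `ℤ_[p]`-span of the basis `b`. -/
def padicLattice (b : Basis ι ℚ_[p] V) : Set V :=
  {x | ∀ i, ‖b.repr x i‖ ≤ 1}

theorem basis_mem_padicLattice (b : Basis ι ℚ_[p] V) (i : ι) : b i ∈ b.padicLattice := fun j ↦ by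
  classical
  rw [repr_self, Finsupp.single_apply]
  split_ifs <;> simp

theorem mem_padicLattice_unitsSMul (b : Basis ι ℚ_[p] V) (w : ι → ℚ_[p]ˣ) (x : V) :
    x ∈ (b.unitsSMul w).padicLattice ↔ ∀ i, ‖b.repr x i‖ ≤ ‖(w i : ℚ_[p])‖ := by
  refine forall_congr' fun i ↦ ?_
  rw [repr_unitsSMul, Units.smul_def, smul_eq_mul, norm_mul, Units.val_inv_eq_inv_val, norm_inv,
    inv_mul_le_iff₀ (norm_pos_iff.2 (w i).ne_zero), mul_one]

theorem padicLattice_unitsSMul_of_norm_eq_one (b : Basis ι ℚ_[p] V) {w : ι → ℚ_[p]ˣ}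
    (hw : ∀ i, ‖(w i : ℚ_[p])‖ = 1) : (b.unitsSMul w).padicLattice = b.padicLattice := by
  ext x
  simp only [mem_padicLattice_unitsSMul, hw]
  rfl

theorem image_equiv_padicLattice (b₁ b₂ : Basis ι ℚ_[p] V) :
    b₁.equiv b₂ (Equiv.refl ι) '' b₁.padicLattice = b₂.padicLattice := by
  ext y
  rw [LinearEquiv.image_eq_preimage_symm]
  simp [padicLattice, Basis.equiv]

theorem padicLattice_eq_setOf_exists (b : Basis (Fin 2) ℚ_[p] V) :
    b.padicLattice = {x | ∃ a c : ℤ_[p], x = (a : ℚ_[p]) • b 0 + (c : ℚ_[p]) • b 1} := by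
  ext x
  constructor
  · intro hx
    refine ⟨⟨_, hx 0⟩, ⟨_, hx 1⟩, ?_⟩
    rw [← Fin.sum_univ_two (fun i ↦ b.repr x i • b i), b.sum_repr]
  · rintro ⟨a, c, rfl⟩ i
    fin_cases i <;> simp [PadicInt.norm_le_one]

section Translate

variable [DecidableEq ι] (b : Basis ι ℚ_[p] V) (i : ι)

theorem mem_padicLattice_iff_forall_ne_and {x : V} :
    x ∈ b.padicLattice ↔ (∀ l ≠ i, ‖b.repr x l‖ ≤ 1) ∧ ‖b.repr x i‖ ≤ 1 :=
  ⟨fun h ↦ ⟨fun l _ ↦ h l, h i⟩, fun h l ↦ if hl : l = i then hl ▸ h.2 else h.1 l hl⟩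

theorem mem_vadd_padicLattice_unitsSMul_mulSingle (t : ℚ_[p]ˣ) (c : ℚ_[p]) (x : V) :
    x ∈ c • b i +ᵥ (b.unitsSMul (Pi.mulSingle i t)).padicLattice ↔
      (∀ l ≠ i, ‖b.repr x l‖ ≤ 1) ∧ ‖b.repr x i - c‖ ≤ ‖(t : ℚ_[p])‖ := by
  have hrepr (l : ι) : b.repr (-(c • b i) + x) l = b.repr x l - if l = i then c else 0 := by
    simp [Finsupp.single_apply, eq_comm (a := i), neg_add_eq_sub]
  rw [Set.mem_vadd_set_iff_neg_vadd_mem, vadd_eq_add, mem_padicLattice_unitsSMul]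
  simp only [hrepr]
  refine ⟨fun h ↦ ⟨fun l hl ↦ ?_, ?_⟩, fun h l ↦ ?_⟩
  · simpa [hl] using h l
  · simpa using h i
  · by_cases hl : l = i
    · simpa [hl] using h.2
    · simpa [hl] using h.1 l hl

theorem padicLattice_eq_biUnion {t : ℚ_[p]ˣ} {k : ℕ} (ht : ‖(t : ℚ_[p])‖ = (p : ℝ) ^ (-k : ℤ)) :
    b.padicLattice = ⋃ j ∈ Finset.range (p ^ k),
      (j : ℚ_[p]) • b i +ᵥ (b.unitsSMul (Pi.mulSingle i t)).padicLattice := by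
  ext x
  simp only [Set.mem_iUnion, Finset.mem_range, exists_prop,
    mem_vadd_padicLattice_unitsSMul_mulSingle, mem_padicLattice_iff_forall_ne_and b i, ht]
  constructor
  · rintro ⟨hne, hi⟩
    obtain ⟨j, hj, hx⟩ := Padic.exists_natCast_norm_sub_le hi k
    exact ⟨j, hj, hne, hx⟩
  · rintro ⟨j, -, hne, hx⟩
    refine ⟨hne, ?_⟩
    have hpk : (p : ℝ) ^ (-k : ℤ) ≤ 1 :=
      zpow_le_one_of_nonpos₀ (by exact_mod_cast (Fact.out : p.Prime).one_le) (by omega)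
    calc ‖b.repr x i‖ = ‖(b.repr x i - j) + j‖ := by rw [sub_add_cancel]
      _ ≤ max ‖b.repr x i - j‖ ‖(j : ℚ_[p])‖ := IsUltrametricDist.norm_add_le_max _ _
      _ ≤ 1 := max_le (hx.trans hpk) (IsUltrametricDist.norm_natCast_le_one _ j)

theorem pairwiseDisjoint_vadd_padicLattice {t : ℚ_[p]ˣ} {k : ℕ}
    (ht : ‖(t : ℚ_[p])‖ = (p : ℝ) ^ (-k : ℤ)) :
    (Finset.range (p ^ k) : Set ℕ).PairwiseDisjoint
      fun j ↦ (j : ℚ_[p]) • b i +ᵥ (b.unitsSMul (Pi.mulSingle i t)).padicLattice := by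
  intro j₁ hj₁ j₂ hj₂ hne
  refine Set.disjoint_left.2 fun x hx₁ hx₂ ↦ hne ?_
  rw [mem_vadd_padicLattice_unitsSMul_mulSingle, ht] at hx₁ hx₂
  simp only [Finset.coe_range, Set.mem_Iio] at hj₁ hj₂
  refine Padic.eq_of_norm_natCast_sub_le hj₁ hj₂ ?_
  calc ‖(j₁ - j₂ : ℚ_[p])‖ = dist (j₁ : ℚ_[p]) j₂ := (dist_eq_norm _ _).symm
    _ ≤ max (dist (j₁ : ℚ_[p]) (b.repr x i)) (dist (b.repr x i) j₂) := dist_triangle_max _ _ _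
    _ ≤ _ := by
      rw [dist_comm, dist_eq_norm, dist_eq_norm]
      exact max_le hx₁.2 hx₂.2

end Translate

variable [TopologicalSpace V] [IsTopologicalAddGroup V] [ContinuousSMul ℚ_[p] V] [T2Space V]

theorem isClosed_padicLattice [Finite ι] (b : Basis ι ℚ_[p] V) : IsClosed b.padicLattice := by
  have : FiniteDimensional ℚ_[p] V := Module.Finite.of_basis b
  rw [padicLattice, Set.ofPred_forall]
  exact isClosed_iInter fun i ↦
    isClosed_le (b.coord i).continuous_of_finiteDimensional.norm continuous_const

variable [MeasurableSpace V] [BorelSpace V] (μ : Measure V) [μ.IsAddLeftInvariant]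
  [Finite ι] [DecidableEq ι]

theorem measure_padicLattice_eq_pow_mul (b : Basis ι ℚ_[p] V) (i : ι) {t : ℚ_[p]ˣ} {k : ℕ}
    (ht : ‖(t : ℚ_[p])‖ = (p : ℝ) ^ (-k : ℤ)) :
    μ b.padicLattice = p ^ k * μ (b.unitsSMul (Pi.mulSingle i t)).padicLattice := by
  rw [b.padicLattice_eq_biUnion i ht,
    measure_biUnion_finset (b.pairwiseDisjoint_vadd_padicLattice i ht)
      fun j _ ↦ (isClosed_padicLattice _).measurableSet.const_vadd _]
  simp [measure_vadd]

theorem measure_padicLattice_unitsSMul_mulSingle_of_norm_le_one (b : Basis ι ℚ_[p] V) (i : ι)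
    {t : ℚ_[p]ˣ} (ht : ‖(t : ℚ_[p])‖ ≤ 1) :
    μ (b.unitsSMul (Pi.mulSingle i t)).padicLattice = ‖(t : ℚ_[p])‖ₑ * μ b.padicLattice := by
  have hv := (Padic.norm_le_one_iff_val_nonneg _).1 ht
  have htk : ‖(t : ℚ_[p])‖ = (p : ℝ) ^ (-((t : ℚ_[p]).valuation.toNat : ℤ)) := by
    rw [Padic.norm_eq_zpow_neg_valuation t.ne_zero, Int.toNat_of_nonneg hv]
  have hpk : ‖(t : ℚ_[p])‖ₑ * (p : ENNReal) ^ (t : ℚ_[p]).valuation.toNat = 1 := by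
    rw [← ofReal_norm, htk, zpow_neg, zpow_natCast,
      ENNReal.ofReal_inv_of_pos (pow_pos (Nat.cast_pos.2 (Fact.out : p.Prime).pos) _),
      ENNReal.ofReal_pow (Nat.cast_nonneg p), ENNReal.ofReal_natCast]
    exact ENNReal.inv_mul_cancel (by simp [(Fact.out : p.Prime).ne_zero]) (by simp)
  rw [measure_padicLattice_eq_pow_mul μ b i htk, ← mul_assoc, hpk, one_mul]

theorem measure_padicLattice_unitsSMul_mulSingle (b : Basis ι ℚ_[p] V) (i : ι) (t : ℚ_[p]ˣ) :
    μ (b.unitsSMul (Pi.mulSingle i t)).padicLattice = ‖(t : ℚ_[p])‖ₑ * μ b.padicLattice := by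
  rcases le_total ‖(t : ℚ_[p])‖ 1 with ht | ht
  · exact measure_padicLattice_unitsSMul_mulSingle_of_norm_le_one μ b i ht
  · have ht' : ‖((t⁻¹ : ℚ_[p]ˣ) : ℚ_[p])‖ ≤ 1 := by
      rw [Units.val_inv_eq_inv_val, norm_inv]
      exact inv_le_one_of_one_le₀ ht
    have := measure_padicLattice_unitsSMul_mulSingle_of_norm_le_one μ
      (b.unitsSMul (Pi.mulSingle i t)) i ht'
    rw [unitsSMul_unitsSMul, ← Pi.mulSingle_mul, inv_mul_cancel, Pi.mulSingle_one,
      unitsSMul_one] at this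
    rw [this, ← mul_assoc, ← enorm_mul, ← Units.val_mul, mul_inv_cancel, Units.val_one, enorm_one,
      one_mul]

end Module.Basis

open Module

theorem exists_basis_padicLattice_eq_apply_eq {p : ℕ} [Fact p.Prime] {V : Type*} [AddCommGroup V]
    [Module ℚ_[p] V] {Δ : V →ₗ[ℚ_[p]] V →ₗ[ℚ_[p]] ℚ_[p]} (hΔ : Δ.IsAlt) (hsep : Δ.SeparatingLeft)
    (b : Basis (Fin 2) ℚ_[p] V) {c : ℚ_[p]} (hc : ‖c‖ = ‖Δ (b 0) (b 1)‖) :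
    ∃ b' : Basis (Fin 2) ℚ_[p] V, b'.padicLattice = b.padicLattice ∧ Δ (b' 0) (b' 1) = c := by
  have hd := hΔ.apply_basis_ne_zero hsep b
  have hc0 : c ≠ 0 := norm_ne_zero_iff.1 (hc ▸ norm_ne_zero_iff.2 hd)
  set u := Units.mk0 (c / Δ (b 0) (b 1)) (div_ne_zero hc0 hd)
  refine ⟨b.unitsSMul (Pi.mulSingle 0 u), b.padicLattice_unitsSMul_of_norm_eq_one fun i ↦ ?_, ?_⟩
  · fin_cases i <;> simp [u, hc, hd]
  · simp [u, Basis.unitsSMul_apply, div_mul_cancel₀ _ hd]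

variable {p : ℕ} [Fact p.Prime]

theorem isLattice_iff_exists_padicLattice {L : Set (Fin 2 → ℚ_[p])} :
    IsLattice L ↔ ∃ b : Basis (Fin 2) ℚ_[p] (Fin 2 → ℚ_[p]), L = b.padicLattice := by
  simp only [IsLattice, Basis.padicLattice_eq_setOf_exists]

theorem dualLattice_padicLattice
    {Δ : (Fin 2 → ℚ_[p]) →ₗ[ℚ_[p]] (Fin 2 → ℚ_[p]) →ₗ[ℚ_[p]] ℚ_[p]} (hΔ : Δ.IsAlt)
    (b : Basis (Fin 2) ℚ_[p] (Fin 2 → ℚ_[p])) (hb : Δ (b 0) (b 1) = 1) :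
    dualLattice Δ b.padicLattice = b.padicLattice := by
  have hΔb (u v) : Δ u v = b.repr u 0 * b.repr v 1 - b.repr u 1 * b.repr v 0 := by
    rw [hΔ.apply_eq_det_smul b, hb, smul_eq_mul, mul_one]
  ext u
  refine ⟨fun hu i ↦ ?_, fun hu v hv ↦ ?_⟩
  · fin_cases i
    · simpa [hΔb] using hu _ (b.basis_mem_padicLattice 1)
    · simpa [hΔb] using hu _ (b.basis_mem_padicLattice 0)
  · rw [hΔb, sub_eq_add_neg]
    refine (IsUltrametricDist.norm_add_le_max _ _).trans (max_le ?_ ?_) <;>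
      simp only [norm_neg, norm_mul] <;> exact mul_le_one₀ (hu _) (norm_nonneg _) (hv _)

theorem measure_padicLattice_eq_enorm [MeasurableSpace (Fin 2 → ℚ_[p])]
    [BorelSpace (Fin 2 → ℚ_[p])] (μ : Measure (Fin 2 → ℚ_[p])) [μ.IsAddLeftInvariant]
    {Δ : (Fin 2 → ℚ_[p]) →ₗ[ℚ_[p]] (Fin 2 → ℚ_[p]) →ₗ[ℚ_[p]] ℚ_[p]} (hΔ : Δ.IsAlt)
    (hsep : Δ.SeparatingLeft)
    (hnorm : ∀ M : Set (Fin 2 → ℚ_[p]), IsLattice M → dualLattice Δ M = M → μ M = 1)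
    (b : Basis (Fin 2) ℚ_[p] (Fin 2 → ℚ_[p])) :
    μ b.padicLattice = ‖Δ (b 0) (b 1)‖ₑ := by
  have hd := hΔ.apply_basis_ne_zero hsep b
  set u := Units.mk0 _ hd
  set g := b.unitsSMul (Pi.mulSingle 1 u⁻¹)
  have hg : Δ (g 0) (g 1) = 1 := by simp [g, u, Basis.unitsSMul_apply, Units.smul_def, hd]
  have hμg : μ g.padicLattice = 1 :=
    hnorm _ (isLattice_iff_exists_padicLattice.2 ⟨g, rfl⟩) (dualLattice_padicLattice hΔ g hg)
  rw [Basis.measure_padicLattice_unitsSMul_mulSingle] at hμg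
  calc μ b.padicLattice = ‖((u * u⁻¹ : ℚ_[p]ˣ) : ℚ_[p])‖ₑ * μ b.padicLattice := by simp
    _ = ‖Δ (b 0) (b 1)‖ₑ := by rw [Units.val_mul, enorm_mul, mul_assoc, hμg, mul_one]; rfl

/-- **Transitivity of the symplectic group on lattices of equal measure.**
If `L₁` and `L₂` are lattices in the two-dimensional `p`-adic symplectic space `(ℚ_p², Δ)`
with equal Haar measures `|L₁| = |L₂|` (Haar measure normalized so that self-dual lattices
have measure `1`), then there is a symplectic transformation `S ∈ Sp(F,Δ)` with
`S·L₁ = L₂`. -/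
theorem exists_symplectic_map_of_measure_eq
    {p : ℕ} [Fact p.Prime]
    [MeasurableSpace (Fin 2 → ℚ_[p])] [BorelSpace (Fin 2 → ℚ_[p])]
    (μ : Measure (Fin 2 → ℚ_[p])) [μ.IsAddHaarMeasure]
    (Δ : (Fin 2 → ℚ_[p]) →ₗ[ℚ_[p]] (Fin 2 → ℚ_[p]) →ₗ[ℚ_[p]] ℚ_[p])
    (halt : ∀ v, Δ v v = 0)
    (hnd : ∀ v, (∀ w, Δ v w = 0) → v = 0)
    (hnorm : ∀ M : Set (Fin 2 → ℚ_[p]), IsLattice M → dualLattice Δ M = M → μ M = 1)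
    (L₁ L₂ : Set (Fin 2 → ℚ_[p])) (hL₁ : IsLattice L₁) (hL₂ : IsLattice L₂)
    (hμ : μ L₁ = μ L₂) :
    ∃ S : (Fin 2 → ℚ_[p]) ≃ₗ[ℚ_[p]] (Fin 2 → ℚ_[p]),
      (∀ u v, Δ (S u) (S v) = Δ u v) ∧ S '' L₁ = L₂ := by
  obtain ⟨b₁, rfl⟩ := isLattice_iff_exists_padicLattice.1 hL₁
  obtain ⟨b₂, rfl⟩ := isLattice_iff_exists_padicLattice.1 hL₂
  have hnorm_eq : ‖Δ (b₁ 0) (b₁ 1)‖ = ‖Δ (b₂ 0) (b₂ 1)‖ := by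
    rw [measure_padicLattice_eq_enorm μ halt hnd hnorm,
      measure_padicLattice_eq_enorm μ halt hnd hnorm, ← ofReal_norm, ← ofReal_norm,
      ENNReal.ofReal_eq_ofReal_iff (norm_nonneg _) (norm_nonneg _)] at hμ
    exact hμ
  obtain ⟨b₂', hL₂', hΔ₂'⟩ := exists_basis_padicLattice_eq_apply_eq halt hnd b₂ hnorm_eq
  exact ⟨b₁.equiv b₂' (Equiv.refl _), LinearMap.IsAlt.apply_basis_equiv halt hΔ₂'.symm,
    hL₂' ▸ b₁.image_equiv_padicLattice b₂'⟩
end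

section
/- The indicator function h_L of a lattice L in a p-adic symplectic space (F, Δ) is Δ-positive definite: for any points z₁,…,z_n ∈ F and complex numbers c₁,…,c_n, the sum Σ_{i,j} c_i·conj(c_j)·h_L(z_i - z_j)·χ(-½Δ(z_i,z_j)) is a nonnegative real number, provided |L| ≤ 1. -/
open MeasureTheory

/-!
If `|L| ≤ 1` then `Δ` is `ℤ_p`-valued on `L`. Otherwise, for a basis `b₀, b₁` of `L`, the
vectors `Δ(b₀, b₁)⁻¹ b₀, b₁` span a self-dual lattice `M ⊊ L`; then `|M| = 1`, and `L` contains
the disjoint translates `M` and `b₀ + M`, so `|L| ≥ 2`.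
Since `p` is odd, `χ(-½Δ(u, v)) = 1` for `u, v ∈ L`, and on a coset `r + L` the twist splits as
`χ(-½Δ(x, y)) = f(x) conj (f(y))` with `f(x) = χ(½Δ(r, x))`. The sum is therefore
`Σ_{cosets} |Σ_{zᵢ in the coset} cᵢ f(zᵢ)|² ≥ 0`.
-/

open Module
open scoped Pointwise

theorem Finset.sum_sum_ite_mul_star_nonneg {ι κ R : Type*} [Fintype ι] [DecidableEq κ]
    [CommSemiring R] [PartialOrder R] [StarRing R] [StarOrderedRing R]
    (k : ι → κ) (d : ι → R) :
    0 ≤ ∑ i, ∑ j, if k i = k j then d i * star (d j) else 0 := by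
  set g : κ → R := fun q => ∑ j with k j = q, d j
  have hrow : ∀ i, (∑ j, if k i = k j then d i * star (d j) else 0) = d i * star (g (k i)) := by
    intro i
    rw [← Finset.sum_filter, star_sum, Finset.mul_sum]
    simp only [eq_comm]
  calc (0 : R) ≤ ∑ q ∈ Finset.univ.image k, g q * star (g q) :=
        Finset.sum_nonneg fun q _ => mul_star_self_nonneg (g q)
    _ = ∑ q ∈ Finset.univ.image k, ∑ i with k i = q, d i * star (g (k i)) := by
        refine Finset.sum_congr rfl fun q _ => ?_
        rw [Finset.sum_mul]
        exact Finset.sum_congr rfl fun i hi => by rw [(Finset.mem_filter.1 hi).2]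
    _ = _ := by
        rw [Finset.sum_fiberwise_of_maps_to fun i hi => Finset.mem_image_of_mem k hi]
        simp only [hrow]

theorem AddSubgroup.two_mul_measure_le_of_lt {G : Type*} [AddGroup G] [MeasurableSpace G]
    [MeasurableAdd G] (μ : Measure G) [μ.IsAddLeftInvariant] {H K : AddSubgroup G} (hHK : H < K)
    (hH : MeasurableSet (H : Set G)) : 2 * μ H ≤ μ K := by
  obtain ⟨x, hxK, hxH⟩ := SetLike.exists_of_lt hHK
  have hdisj : Disjoint (H : Set G) (x +ᵥ (H : Set G)) := by
    refine Set.disjoint_left.2 ?_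
    rintro _ hy ⟨h, hh, rfl⟩
    exact hxH (by simpa using H.sub_mem hy hh)
  calc 2 * μ H = μ H + μ (x +ᵥ (H : Set G)) := by rw [measure_vadd, two_mul]
    _ = μ ((H : Set G) ∪ (x +ᵥ (H : Set G))) := (measure_union' hdisj hH).symm
    _ ≤ μ K := measure_mono <| Set.union_subset hHK.le <| by
        rintro _ ⟨h, hh, rfl⟩
        exact K.add_mem hxK (hHK.le hh)

section Twist

variable {K V : Type*} [Field K] [AddCommGroup V] [Module K V]

theorem AddChar.apply_neg_half_eq_mul (ψ : AddChar K ℂ) (hψ : ∀ a, ‖ψ a‖ = 1)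
    {Δ : V →ₗ[K] V →ₗ[K] K} (hΔ : Δ.IsAlt) (x y r : V) :
    ψ (-(2⁻¹ * Δ x y)) = ψ (2⁻¹ * Δ r x) * starRingEnd ℂ (ψ (2⁻¹ * Δ r y)) *
      ψ (-(2⁻¹ * Δ (x - r) (y - r))) := by
  rw [← Complex.inv_eq_conj (hψ _), ← ψ.map_neg_eq_inv, ← ψ.map_add_eq_mul, ← ψ.map_add_eq_mul]
  congr 1
  simp only [map_sub, LinearMap.sub_apply, hΔ.self_eq_zero, ← hΔ.neg x r]
  ring

noncomputable def cosetPhase (H : AddSubgroup V) (Δ : V →ₗ[K] V →ₗ[K] K) (ψ : AddChar K ℂ)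
    (x : V) : ℂ :=
  ψ (2⁻¹ * Δ (x : V ⧸ H).out x)

theorem indicator_sub_mul_apply_neg_half_eq_ite (H : AddSubgroup V) [DecidableEq (V ⧸ H)]
    {Δ : V →ₗ[K] V →ₗ[K] K} (hΔ : Δ.IsAlt) {ψ : AddChar K ℂ} (hψ : ∀ a, ‖ψ a‖ = 1)
    (hH : ∀ u ∈ H, ∀ v ∈ H, ψ (-(2⁻¹ * Δ u v)) = 1) (x y : V) :
    (H : Set V).indicator (fun _ => (1 : ℂ)) (x - y) * ψ (-(2⁻¹ * Δ x y)) =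
      if (x : V ⧸ H) = y then cosetPhase H Δ ψ x * starRingEnd ℂ (cosetPhase H Δ ψ y)
      else 0 := by
  open QuotientAddGroup in
  by_cases hxy : (x : V ⧸ H) = y
  · set r := (x : V ⧸ H).out
    have hx : x - r ∈ H := eq_iff_sub_mem.1 (out_eq' _).symm
    have hy : y - r ∈ H := eq_iff_sub_mem.1 (hxy.symm.trans (out_eq' _).symm)
    rw [if_pos hxy, Set.indicator_of_mem (eq_iff_sub_mem.1 hxy), one_mul,
      ψ.apply_neg_half_eq_mul hψ hΔ x y r, hH _ hx _ hy, mul_one, cosetPhase, cosetPhase, ← hxy]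
  · rw [if_neg hxy, Set.indicator_of_notMem (mt eq_iff_sub_mem.2 hxy), zero_mul]

end Twist

namespace Module.Basis

variable {p : ℕ} [Fact p.Prime] {V : Type*} [AddCommGroup V] [Module ℚ_[p] V]

def zpLattice (b : Basis (Fin 2) ℚ_[p] V) : AddSubgroup V where
  carrier := {x | ∃ a c : ℤ_[p], x = (a : ℚ_[p]) • b 0 + (c : ℚ_[p]) • b 1}
  add_mem' := by
    rintro _ _ ⟨a, c, rfl⟩ ⟨a', c', rfl⟩
    exact ⟨a + a', c + c', by push_cast; module⟩
  zero_mem' := ⟨0, 0, by simp⟩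
  neg_mem' := by
    rintro _ ⟨a, c, rfl⟩
    exact ⟨-a, -c, by push_cast; module⟩

theorem mem_zpLattice {b : Basis (Fin 2) ℚ_[p] V} {x : V} :
    x ∈ b.zpLattice ↔ ∃ a c : ℤ_[p], x = (a : ℚ_[p]) • b 0 + (c : ℚ_[p]) • b 1 :=
  Iff.rfl

theorem apply_mem_zpLattice (b : Basis (Fin 2) ℚ_[p] V) (i : Fin 2) : b i ∈ b.zpLattice := by
  fin_cases i
  exacts [⟨1, 0, by simp⟩, ⟨0, 1, by simp⟩]

theorem isCompact_zpLattice [TopologicalSpace V] [ContinuousAdd V] [ContinuousSMul ℚ_[p] V]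
    (b : Basis (Fin 2) ℚ_[p] V) : IsCompact (b.zpLattice : Set V) := by
  have : (b.zpLattice : Set V) =
      Set.range fun ac : ℤ_[p] × ℤ_[p] => (ac.1 : ℚ_[p]) • b 0 + (ac.2 : ℚ_[p]) • b 1 := by
    ext x
    simp [mem_zpLattice, eq_comm]
  rw [this]
  exact isCompact_range (by fun_prop)

theorem norm_apply_le_of_mem_zpLattice (b : Basis (Fin 2) ℚ_[p] V)
    {Δ : V →ₗ[ℚ_[p]] V →ₗ[ℚ_[p]] ℚ_[p]} (hΔ : Δ.IsAlt) {u v : V}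
    (hu : u ∈ b.zpLattice) (hv : v ∈ b.zpLattice) : ‖Δ u v‖ ≤ ‖Δ (b 0) (b 1)‖ := by
  obtain ⟨a, c, rfl⟩ := hu
  obtain ⟨a', c', rfl⟩ := hv
  have hexp : Δ ((a : ℚ_[p]) • b 0 + (c : ℚ_[p]) • b 1)
      ((a' : ℚ_[p]) • b 0 + (c' : ℚ_[p]) • b 1) =
      ((a * c' - c * a' : ℤ_[p]) : ℚ_[p]) * Δ (b 0) (b 1) := by
    simp only [map_add, map_smul, LinearMap.add_apply, LinearMap.smul_apply, smul_eq_mul,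
      hΔ.self_eq_zero, ← hΔ.neg (b 0) (b 1)]
    push_cast
    ring
  rw [hexp, norm_mul]
  exact mul_le_of_le_one_left (norm_nonneg _) (PadicInt.norm_le_one _)

end Module.Basis

theorem Padic.norm_two_eq_one {p : ℕ} [Fact p.Prime] (hp : p ≠ 2) : ‖(2 : ℚ_[p])‖ = 1 := by
  exact_mod_cast Padic.norm_natCast_eq_one_iff.2 ((Nat.coprime_primes Fact.out Nat.prime_two).2 hp)

section SymplecticLattice

variable {p : ℕ} [Fact p.Prime]

theorem dualLattice_zpLattice_of_apply_eq_one (b : Basis (Fin 2) ℚ_[p] (Fin 2 → ℚ_[p]))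
    {Δ : (Fin 2 → ℚ_[p]) →ₗ[ℚ_[p]] (Fin 2 → ℚ_[p]) →ₗ[ℚ_[p]] ℚ_[p]} (hΔ : Δ.IsAlt)
    (hb : Δ (b 0) (b 1) = 1) : dualLattice Δ b.zpLattice = b.zpLattice := by
  ext u
  refine ⟨fun hu => ?_, fun hu v hv => by
    simpa [hb] using b.norm_apply_le_of_mem_zpLattice hΔ hu hv⟩
  have hrepr : u = b.repr u 0 • b 0 + b.repr u 1 • b 1 := by
    conv_lhs => rw [← b.sum_repr u]
    exact Fin.sum_univ_two _
  have h0 : Δ u (b 0) = -b.repr u 1 := by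
    rw [hrepr]
    simp [hΔ.self_eq_zero, ← hΔ.neg (b 0) (b 1), hb]
  have h1 : Δ u (b 1) = b.repr u 0 := by
    rw [hrepr]
    simp [hΔ.self_eq_zero, hb]
  have hα := hu _ (b.apply_mem_zpLattice 1)
  have hβ := hu _ (b.apply_mem_zpLattice 0)
  rw [h1] at hα
  rw [h0, norm_neg] at hβ
  exact ⟨⟨_, hα⟩, ⟨_, hβ⟩, hrepr⟩

theorem norm_apply_le_one_of_measure_le_one
    [MeasurableSpace (Fin 2 → ℚ_[p])] [BorelSpace (Fin 2 → ℚ_[p])]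
    (μ : Measure (Fin 2 → ℚ_[p])) [μ.IsAddHaarMeasure]
    {Δ : (Fin 2 → ℚ_[p]) →ₗ[ℚ_[p]] (Fin 2 → ℚ_[p]) →ₗ[ℚ_[p]] ℚ_[p]} (hΔ : Δ.IsAlt)
    (hnorm : ∀ M : Set (Fin 2 → ℚ_[p]), IsLattice M → dualLattice Δ M = M → μ M = 1)
    (b : Basis (Fin 2) ℚ_[p] (Fin 2 → ℚ_[p])) (hμ : μ b.zpLattice ≤ 1)
    {u v : Fin 2 → ℚ_[p]} (hu : u ∈ b.zpLattice) (hv : v ∈ b.zpLattice) : ‖Δ u v‖ ≤ 1 := by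
  refine (b.norm_apply_le_of_mem_zpLattice hΔ hu hv).trans (not_lt.1 fun ht => ?_)
  set t := Δ (b 0) (b 1)
  have ht0 : t ≠ 0 := norm_pos_iff.1 (one_pos.trans ht)
  set b' := b.unitsSMul ![Units.mk0 t⁻¹ (inv_ne_zero ht0), 1]
  have hb'0 : b' 0 = t⁻¹ • b 0 := b.unitsSMul_apply 0
  have hb'1 : b' 1 = b 1 := by simp [b', b.unitsSMul_apply]
  have hdual : dualLattice Δ b'.zpLattice = b'.zpLattice :=
    dualLattice_zpLattice_of_apply_eq_one b' hΔ (by simp [hb'0, hb'1, ht0, t])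
  have hlt : b'.zpLattice < b.zpLattice := by
    refine SetLike.lt_iff_le_and_exists.2 ⟨?_, b 0, b.apply_mem_zpLattice 0, fun h0 => ?_⟩
    · rintro _ ⟨a, c, rfl⟩
      have ha : ‖(a : ℚ_[p]) * t⁻¹‖ ≤ 1 := by
        rw [norm_mul, norm_inv]
        exact mul_le_one₀ (PadicInt.norm_le_one a) (inv_nonneg.2 (norm_nonneg _))
          (inv_le_one_of_one_le₀ ht.le)
      exact ⟨⟨_, ha⟩, c, by simp [hb'0, hb'1, smul_smul]⟩
    · rw [← SetLike.mem_coe, ← hdual] at h0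
      have := h0 _ (b'.apply_mem_zpLattice 1)
      rw [hb'1] at this
      exact this.not_gt ht
  have h2 := AddSubgroup.two_mul_measure_le_of_lt μ hlt b'.isCompact_zpLattice.measurableSet
  have hμ' : μ b'.zpLattice = 1 := hnorm _ ⟨b', rfl⟩ hdual
  rw [hμ', mul_one] at h2
  exact absurd (h2.trans hμ) (by norm_num)

end SymplecticLattice

theorem indicator_lattice_pos_def_general
    {p : ℕ} [Fact p.Prime] (hodd : p ≠ 2)
    [MeasurableSpace (Fin 2 → ℚ_[p])] [BorelSpace (Fin 2 → ℚ_[p])]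
    (μ : Measure (Fin 2 → ℚ_[p])) [μ.IsAddHaarMeasure]
    (Δ : (Fin 2 → ℚ_[p]) →ₗ[ℚ_[p]] (Fin 2 → ℚ_[p]) →ₗ[ℚ_[p]] ℚ_[p])
    (halt : ∀ v, Δ v v = 0)
    (hnorm : ∀ M : Set (Fin 2 → ℚ_[p]), IsLattice M → dualLattice Δ M = M → μ M = 1)
    (χ : ℚ_[p] → ℂ)
    (hχ_add : ∀ x y, χ (x + y) = χ x * χ y)
    (hχ_norm : ∀ x, ‖χ x‖ = 1)
    (hχ_ker : ∀ x, χ x = 1 ↔ ‖x‖ ≤ 1)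
    (L : Set (Fin 2 → ℚ_[p])) (hL : IsLattice L) (hμL : μ L ≤ 1)
    (n : ℕ) (z : Fin n → (Fin 2 → ℚ_[p])) (c : Fin n → ℂ) :
    0 ≤ (∑ i, ∑ j, c i * starRingEnd ℂ (c j) *
          Set.indicator L (fun _ => (1 : ℂ)) (z i - z j) *
          χ (-((2 : ℚ_[p])⁻¹ * Δ (z i) (z j)))).re ∧
      (∑ i, ∑ j, c i * starRingEnd ℂ (c j) *
          Set.indicator L (fun _ => (1 : ℂ)) (z i - z j) *
          χ (-((2 : ℚ_[p])⁻¹ * Δ (z i) (z j)))).im = 0 := by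
  classical
  obtain ⟨b, rfl⟩ : ∃ b : Basis (Fin 2) ℚ_[p] (Fin 2 → ℚ_[p]), L = b.zpLattice := hL
  let ψ : AddChar ℚ_[p] ℂ := ⟨χ, (hχ_ker 0).2 (by simp), hχ_add⟩
  have hψ_triv : ∀ u ∈ b.zpLattice, ∀ v ∈ b.zpLattice, ψ (-(2⁻¹ * Δ u v)) = 1 := by
    intro u hu v hv
    refine (hχ_ker _).2 ?_
    rw [norm_neg, norm_mul, norm_inv, Padic.norm_two_eq_one hodd, inv_one, one_mul]
    exact norm_apply_le_one_of_measure_le_one μ halt hnorm b hμL hu hv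
  open scoped ComplexOrder in
  suffices h : 0 ≤ ∑ i, ∑ j, c i * starRingEnd ℂ (c j) *
      (b.zpLattice : Set (Fin 2 → ℚ_[p])).indicator (fun _ => (1 : ℂ)) (z i - z j) *
      ψ (-(2⁻¹ * Δ (z i) (z j))) from
    ⟨(Complex.nonneg_iff.1 h).1, (Complex.nonneg_iff.1 h).2.symm⟩
  convert Finset.sum_sum_ite_mul_star_nonneg (fun i => (z i : _ ⧸ b.zpLattice))
    (fun i => c i * cosetPhase b.zpLattice Δ ψ (z i)) using 3 with i - j -
  rw [mul_assoc, indicator_sub_mul_apply_neg_half_eq_ite _ halt hχ_norm hψ_triv, mul_ite,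
    mul_zero]
  congr 1
  simp only [star_mul', starRingEnd_apply]
  ring

/-- **`Δ`-positive definiteness of the indicator of a lattice.**
Let `p` be an odd prime, `(ℚ_p², Δ)` a two-dimensional `p`-adic symplectic space with Haar
measure `μ` normalized so that self-dual lattices have measure `1`, `χ(x) = exp(2πi{x}_p)`
the standard additive character (continuous, unitary, with kernel exactly `ℤ_p`), and `L`
a lattice with `|L| ≤ 1`.  Then for all points `z₁,…,z_n` and complex numbers `c₁,…,c_n`,
the sum `Σ_{i,j} cᵢ conj(cⱼ) h_L(zᵢ - zⱼ) χ(-½Δ(zᵢ,zⱼ))` is a nonnegative real number. -/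
theorem indicator_lattice_pos_def
    {p : ℕ} [Fact p.Prime] (hodd : p ≠ 2)
    [MeasurableSpace (Fin 2 → ℚ_[p])] [BorelSpace (Fin 2 → ℚ_[p])]
    (μ : Measure (Fin 2 → ℚ_[p])) [μ.IsAddHaarMeasure]
    (Δ : (Fin 2 → ℚ_[p]) →ₗ[ℚ_[p]] (Fin 2 → ℚ_[p]) →ₗ[ℚ_[p]] ℚ_[p])
    (halt : ∀ v, Δ v v = 0)
    (hnd : ∀ v, (∀ w, Δ v w = 0) → v = 0)
    (hnorm : ∀ M : Set (Fin 2 → ℚ_[p]), IsLattice M → dualLattice Δ M = M → μ M = 1)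
    (χ : ℚ_[p] → ℂ) (hχ_cont : Continuous χ)
    (hχ_add : ∀ x y, χ (x + y) = χ x * χ y)
    (hχ_norm : ∀ x, ‖χ x‖ = 1)
    (hχ_ker : ∀ x, χ x = 1 ↔ ‖x‖ ≤ 1)
    (L : Set (Fin 2 → ℚ_[p])) (hL : IsLattice L) (hμL : μ L ≤ 1)
    (n : ℕ) (z : Fin n → (Fin 2 → ℚ_[p])) (c : Fin n → ℂ) :
    0 ≤ (∑ i, ∑ j, c i * starRingEnd ℂ (c j) *
          Set.indicator L (fun _ => (1 : ℂ)) (z i - z j) *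
          χ (-((2 : ℚ_[p])⁻¹ * Δ (z i) (z j)))).re ∧
      (∑ i, ∑ j, c i * starRingEnd ℂ (c j) *
          Set.indicator L (fun _ => (1 : ℂ)) (z i - z j) *
          χ (-((2 : ℚ_[p])⁻¹ * Δ (z i) (z j)))).im = 0 :=
  indicator_lattice_pos_def_general hodd μ Δ halt hnorm χ hχ_add hχ_norm hχ_ker L hL hμL n z c
end
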